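/- arXiv:1401.3926 — 3 statements merged into one kernel-verified Lean document; each statement's English description precedes it below -/
import Mathlib

section
/- Let A ⊆ B be an integral extension of commutative rings, where B is an integrally closed integral domain and the extension of fraction fields Frac(B)/Frac(A) is a Galois field extension. Then the integral closure of A in its fraction field Frac(A) equals the fixed subring B^{Gal(Frac(B)/Frac(A))}, i.e. the set of elements of B fixed by every element of the Galois group Gal(Frac(B)/Frac(A)). -/
/-- Let `A ⊆ B` be an integral extension of commutative rings, where `B`
is an integrally closed integral domain and the extension of fraction fields
`L = Frac(B)` over `K = Frac(A)` is Galois.  Then the integral closure of `A` in `K`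
equals the fixed subring `B^{Gal(L/K)}`: identifying everything inside `L`, an element
`x` of `K` is integral over `A` if and only if it comes from an element of `B` fixed by
every element of the Galois group `Gal(L/K)`. -/
theorem stmt_0 (A B K L : Type*) [CommRing A] [CommRing B] [IsDomain B]
    [Field K] [Field L]
    [Algebra A B] [Algebra A K] [IsFractionRing A K]
    [Algebra B L] [IsFractionRing B L]
    [Algebra A L] [Algebra K L]
    [IsScalarTower A B L] [IsScalarTower A K L]
    [Algebra.IsIntegral A B] [IsIntegrallyClosed B]
    [IsGalois K L] :
    ∀ x : K, x ∈ integralClosure A K ↔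
      ∃ b : B, (∀ σ : L ≃ₐ[K] L, σ (algebraMap B L b) = algebraMap B L b) ∧
        algebraMap K L x = algebraMap B L b := by
  intro x
  constructor
  · intro hx
    have hxL : IsIntegral A (algebraMap K L x) :=
      (hx : IsIntegral A x).map (IsScalarTower.toAlgHom A K L)
    have hxB : IsIntegral B (algebraMap K L x) := hxL.tower_top
    obtain ⟨b, hb⟩ := IsIntegrallyClosed.isIntegral_iff.mp hxB
    refine ⟨b, fun σ => ?_, hb.symm⟩
    rw [hb]
    exact σ.commutes x
  · rintro ⟨b, -, hb⟩
    have hbL : IsIntegral A (algebraMap B L b) :=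
      (Algebra.IsIntegral.isIntegral b).map (IsScalarTower.toAlgHom A B L)
    rw [← hb] at hbL
    exact IsIntegral.tower_bot (algebraMap K L).injective hbL
end

section
/- Let a ≥ 1 and b_0, …, b_k ≥ 1 be positive integers with gcd(a, b_0, …, b_k) = 1, and let c ∈ ℂ be nonzero. Then the polynomial t^a − c·x_0^{b_0} ⋯ x_k^{b_k} is irreducible in the polynomial ring ℂ[x_0, …, x_k, t]. -/
/-!
By Gauss's lemma it suffices to prove irreducibility over the fraction field `K` of
`ℂ[x_0, …, x_k]`. Since `K` contains a square root of `-1`, Capelli's theorem reduces this to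
showing that `m = c·x_0^{b_0} ⋯ x_k^{b_k}` is not a `p`-th power in `K` for any prime `p ∣ a`.
A `p`-th root of `m` in `K` would lie in the integrally closed ring `ℂ[x_0, …, x_k]`, forcing
`p` to divide the multiplicity `b_i` of every prime `x_i` in `m`, hence `gcd(a, b_0, …, b_k)`.
-/

open Polynomial IntermediateField

universe u

theorem exists_pow_eq_neg_one_of_sq_eq_neg_one {K : Type*} [Field K] {I : K} (hI : I ^ 2 = -1)
    {p : ℕ} (hp : p.Prime) : ∃ ε : K, ε ^ p = -1 := by
  rcases hp.eq_two_or_odd' with rfl | hodd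
  · exact ⟨I, hI⟩
  · exact ⟨-1, hodd.neg_one_pow⟩

theorem X_pow_sub_C_irreducible_of_sq_eq_neg_one {K : Type u} [Field K] {I : K}
    (hI : I ^ 2 = -1) {n : ℕ} (hn : n ≠ 0) {a : K}
    (ha : ∀ p : ℕ, p.Prime → p ∣ n → ∀ b : K, b ^ p ≠ a) :
    Irreducible (X ^ n - C a) := by
  induction n using induction_on_primes generalizing K a with
  | zero => exact absurd rfl hn
  | one => simpa using irreducible_X_sub_C a
  | prime_mul p n hp IH =>
    rw [mul_comm]
    apply X_pow_mul_sub_C_irreducible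
      (X_pow_sub_C_irreducible_of_prime hp (ha p hp (dvd_mul_right _ _)))
    intro E _ _ x hx
    have hint : IsIntegral K x := not_not.mp fun h ↦ by
      simpa only [degree_zero, degree_X_pow_sub_C hp.pos,
        WithBot.natCast_ne_bot] using congr_arg degree (hx.symm.trans (dif_neg h))
    refine IH (I := algebraMap K K⟮x⟯ I) (by rw [← map_pow, hI, map_neg, map_one])
      (right_ne_zero_of_mul hn) fun q hq hqn b hb ↦ ?_
    have hnorm : Algebra.norm K b ^ q = (-1) ^ (p + 1) * a := by
      rw [← map_pow, hb, ← adjoin.powerBasis_gen hint,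
        Algebra.PowerBasis.norm_gen_eq_coeff_zero_minpoly]
      simp [minpoly_gen, hx, hp.ne_zero.symm]
      ring
    -- The sign `(-1) ^ (p + 1)` is absorbed because `-1` is a `q`-th power
    -- (for `q = 2` this is where `I` is used).
    obtain ⟨ε, hε⟩ := exists_pow_eq_neg_one_of_sq_eq_neg_one hI hq
    refine ha q hq (dvd_mul_of_dvd_right hqn p) (ε ^ (p + 1) * Algebra.norm K b) ?_
    rw [mul_pow, ← pow_mul, mul_comm (p + 1) q, pow_mul, hε, hnorm, ← mul_assoc, ← mul_pow]
    simp

theorem IsIntegrallyClosed.exists_pow_eq_of_pow_eq_algebraMap {R K : Type*} [CommRing R]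
    [Field K] [Algebra R K] [IsFractionRing R K] [IsIntegrallyClosed R] {n : ℕ} (hn : n ≠ 0)
    {m : R} {z : K} (hz : z ^ n = algebraMap R K m) : ∃ g : R, g ^ n = m := by
  have hint : IsIntegral R z :=
    ⟨X ^ n - C m, monic_X_pow_sub_C m hn, by simp [hz]⟩
  obtain ⟨g, rfl⟩ := IsIntegrallyClosed.algebraMap_eq_of_integral hint
  exact ⟨g, IsFractionRing.injective R K (by rw [map_pow, hz])⟩

theorem dvd_of_emultiplicity_pow_eq {α : Type*} [CommMonoidWithZero α] [IsCancelMulZero α]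
    {q g : α} (hq : Prime q) {n k : ℕ} (h : emultiplicity q (g ^ n) = k) : n ∣ k := by
  rw [emultiplicity_pow hq] at h
  by_cases hg : FiniteMultiplicity q g
  · rw [hg.emultiplicity_eq_multiplicity] at h
    exact ⟨_, by exact_mod_cast h.symm⟩
  · rw [emultiplicity_eq_top.2 hg] at h
    rcases eq_or_ne n 0 with rfl | hn
    · simp_all [eq_comm]
    · simp [ENat.mul_top (Nat.cast_ne_zero.2 hn)] at h

theorem Nat.exists_not_dvd_of_gcd_finsetGcd_eq_one {ι : Type*} {s : Finset ι} {b : ι → ℕ}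
    {a p : ℕ} (hp : p ≠ 1) (hpa : p ∣ a) (hgcd : Nat.gcd a (s.gcd b) = 1) :
    ∃ i ∈ s, ¬ p ∣ b i := by
  by_contra! h
  exact hp (Nat.dvd_one.mp (hgcd ▸ Nat.dvd_gcd hpa (Finset.dvd_gcd h)))

namespace MvPolynomial

theorem emultiplicity_X_monomial {R σ : Type*} [CommSemiring R] {i : σ} {s : σ →₀ ℕ} {c : R}
    (hc : c ≠ 0) : emultiplicity (X i) (monomial s c) = s i := by
  have : Nontrivial R := ⟨⟨c, 0, hc⟩⟩
  apply emultiplicity_eq_of_dvd_of_not_dvd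
  · rw [X_pow_eq_monomial, monomial_dvd_monomial, Finsupp.single_le_iff]
    simp
  · rw [X_pow_eq_monomial, monomial_dvd_monomial, Finsupp.single_le_iff]
    simp [hc]

theorem C_mul_prod_X_pow_eq_monomial {R σ : Type*} [CommSemiring R] [Fintype σ]
    (c : R) (b : σ → ℕ) :
    C c * ∏ i, X i ^ b i = monomial (Finsupp.equivFunOnFinite.symm b) c := by
  rw [monomial_eq, Finsupp.prod_fintype] <;> simp

end MvPolynomial

theorem stmt_2_general (k a : ℕ) (ha : 0 < a) (b : Fin (k + 1) → ℕ)
    (hgcd : Nat.gcd a (Finset.univ.gcd b) = 1) (c : ℂ) (hc : c ≠ 0) :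
    Irreducible ((X : (MvPolynomial (Fin (k + 1)) ℂ)[X]) ^ a
      - C (MvPolynomial.C c * ∏ i, MvPolynomial.X i ^ b i)) := by
  set R := MvPolynomial (Fin (k + 1)) ℂ
  rw [(monic_X_pow_sub_C _ ha.ne').irreducible_iff_irreducible_map_fraction_map
    (K := FractionRing R), Polynomial.map_sub, Polynomial.map_pow, map_X, map_C]
  refine X_pow_sub_C_irreducible_of_sq_eq_neg_one (I := algebraMap R _ (MvPolynomial.C .I))
    (by simp [← map_pow]) ha.ne' fun p hp hpa z hz ↦ ?_
  obtain ⟨i, -, hi⟩ := Nat.exists_not_dvd_of_gcd_finsetGcd_eq_one hp.ne_one hpa hgcd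
  obtain ⟨g, hg⟩ := IsIntegrallyClosed.exists_pow_eq_of_pow_eq_algebraMap hp.ne_zero hz
  rw [MvPolynomial.C_mul_prod_X_pow_eq_monomial] at hg
  have hmult : emultiplicity (MvPolynomial.X i) (g ^ p) = b i := by
    rw [hg, MvPolynomial.emultiplicity_X_monomial hc, Finsupp.coe_equivFunOnFinite_symm]
  exact hi (dvd_of_emultiplicity_pow_eq MvPolynomial.X_prime hmult)

/-- Let `a ≥ 1` and `b_0, …, b_k ≥ 1` be positive integers with
`gcd(a, b_0, …, b_k) = 1` and let `c ∈ ℂ` be nonzero.  Then the polynomial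
`t^a − c·x_0^{b_0} ⋯ x_k^{b_k}` is irreducible in `ℂ[x_0, …, x_k, t]`. -/
theorem stmt_2 (k a : ℕ) (ha : 0 < a) (b : Fin (k + 1) → ℕ) (hb : ∀ i, 0 < b i)
    (hgcd : Nat.gcd a (Finset.univ.gcd b) = 1) (c : ℂ) (hc : c ≠ 0) :
    Irreducible ((X : (MvPolynomial (Fin (k + 1)) ℂ)[X]) ^ a
      - C (MvPolynomial.C c * ∏ i, MvPolynomial.X i ^ b i)) :=
  stmt_2_general k a ha b hgcd c hc
end

section
/- Let m_0, …, m_k and e be positive integers with m_j dividing e for every j, and let ℓ = gcd(m_0, …, m_k). Then the polynomial t^e − x_0^{m_0} ⋯ x_k^{m_k} factors in ℂ[x_0, …, x_k, t] as a product of exactly ℓ irreducible factors, and these factors are pairwise non-associated (in particular the polynomial is squarefree). -/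
/-!
With `ℓ = gcd m`, `N = ∏ xⱼ ^ (mⱼ / ℓ)` and `ζ` a primitive `ℓ`-th root of unity,
`t ^ e - N ^ ℓ = ∏ᵢ (t ^ (e / ℓ) - ζ ^ i N)`. Each factor is monic over the integrally closed
ring `ℂ[x]`, so it is irreducible as soon as it is irreducible over the fraction field. There
Capelli's criterion applies (its exceptional case `a = -4 b ^ 4` is a square once `√-1` is in
the field): `ζ ^ i N` is not a `p`-th power, because specialising all variables but one
shows that `p` would divide every `mⱼ / ℓ`, and these are coprime. Distinct factors are distinct
monic polynomials, hence not associated, and a product of pairwise non-associated irreducibles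
in a UFD is squarefree.
-/

open Polynomial IntermediateField

theorem X_pow_sub_C_irreducible_of_sqrt_neg_one {K : Type*} [Field K] (I : K) (hI : I ^ 2 = -1)
    {n : ℕ} (hn : n ≠ 0) {a : K} (ha : ∀ p : ℕ, p.Prime → p ∣ n → ∀ b : K, b ^ p ≠ a) :
    Irreducible (X ^ n - C a) := by
  induction n using induction_on_primes generalizing K a with
  | zero => exact absurd rfl hn
  | one => simpa using irreducible_X_sub_C a
  | prime_mul p n hp IH =>
    rw [mul_comm]
    apply X_pow_mul_sub_C_irreducible
      (X_pow_sub_C_irreducible_of_prime hp (ha p hp (dvd_mul_right _ _)))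
    intro E _ _ x hx
    have hx_int : IsIntegral K x := not_not.mp fun h ↦ by
      simpa only [degree_zero, degree_X_pow_sub_C hp.pos,
        WithBot.natCast_ne_bot] using congr_arg degree (hx.symm.trans (dif_neg h))
    apply IH (algebraMap K K⟮x⟯ I) (by rw [← map_pow, hI, map_neg, map_one])
      (right_ne_zero_of_mul hn)
    intro q hq hqn b hb
    -- the norm of a `q`-th root of `x` is a `q`-th root of `± a`; the sign is absorbed using `I`
    have hnorm : Algebra.norm K b ^ q = (-1) ^ (p + 1) * a := by
      rw [← map_pow, hb, ← adjoin.powerBasis_gen hx_int,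
        Algebra.PowerBasis.norm_gen_eq_coeff_zero_minpoly]
      simp [minpoly_gen, hx, hp.ne_zero.symm, pow_succ]
    obtain ⟨c, hc⟩ : ∃ c : K, c ^ q = (-1) ^ (p + 1) := by
      rcases eq_or_ne q 2 with rfl | hq2
      · exact ⟨I ^ (p + 1), by rw [← pow_mul, mul_comm, pow_mul, hI]⟩
      · exact ⟨(-1) ^ (p + 1), by
          rw [← pow_mul, mul_comm, pow_mul, (hq.odd_of_ne_two hq2).neg_one_pow]⟩
    apply ha q hq (dvd_mul_of_dvd_right hqn p) (c * Algebra.norm K b)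
    rw [mul_pow, hc, hnorm, ← mul_assoc, ← pow_add, ← two_mul, pow_mul, neg_one_sq, one_pow,
      one_mul]

theorem X_pow_sub_C_irreducible_of_isIntegrallyClosed {R : Type*} [CommRing R] [IsDomain R]
    [IsIntegrallyClosed R] (I : R) (hI : I ^ 2 = -1) {n : ℕ} (hn : n ≠ 0) {a : R}
    (ha : ∀ p : ℕ, p.Prime → p ∣ n → ∀ b : R, b ^ p ≠ a) :
    Irreducible (X ^ n - C a) := by
  let K := FractionRing R
  rw [(monic_X_pow_sub_C a hn).irreducible_iff_irreducible_map_fraction_map (K := K),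
    Polynomial.map_sub, Polynomial.map_pow, map_X, map_C]
  refine X_pow_sub_C_irreducible_of_sqrt_neg_one (algebraMap R K I)
    (by rw [← map_pow, hI, map_neg, map_one]) hn fun p hp hpn b hb ↦ ?_
  obtain ⟨r, rfl⟩ := IsIntegrallyClosed.exists_algebraMap_eq_of_isIntegral_pow hp.pos
    (hb ▸ isIntegral_algebraMap)
  exact ha p hp hpn r (IsFractionRing.injective R K (by rwa [map_pow]))

theorem MvPolynomial.dvd_of_pow_eq_C_mul_prod_X_pow {σ R : Type*} [Fintype σ] [DecidableEq σ]
    [CommRing R] [IsDomain R] {m : σ → ℕ} {p : ℕ} {c : R} (hc : c ≠ 0) {r : MvPolynomial σ R}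
    (hr : r ^ p = C c * ∏ l, X l ^ m l) (j : σ) : p ∣ m j := by
  -- specialise every variable but `X j` to `1`, then compare degrees
  have h := congrArg (aeval (Function.update (1 : σ → R[X]) j Polynomial.X)) hr
  simp only [map_pow, map_mul, map_prod, aeval_C, aeval_X, Polynomial.algebraMap_eq] at h
  rw [Finset.prod_eq_single j (fun l _ hl ↦ by simp [hl]) (by simp), Function.update_self] at h
  have hdeg := congrArg natDegree h
  rw [natDegree_pow, natDegree_C_mul_X_pow _ _ hc] at hdeg
  exact ⟨_, hdeg.symm⟩

theorem X_pow_sub_C_mul_prod_X_pow_irreducible {σ K : Type*} [Fintype σ] [Field K]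
    (I : K) (hI : I ^ 2 = -1) {n : ℕ} (hn : n ≠ 0) {m : σ → ℕ} (hm : Finset.univ.gcd m = 1)
    {c : K} (hc : c ≠ 0) :
    Irreducible (X ^ n - C (MvPolynomial.C c * ∏ l, MvPolynomial.X l ^ m l) :
      (MvPolynomial σ K)[X]) := by
  classical
  refine X_pow_sub_C_irreducible_of_isIntegrallyClosed (MvPolynomial.C I)
    (by rw [← map_pow, hI, map_neg, map_one]) hn fun p hp _ r hr ↦ hp.ne_one (Nat.dvd_one.mp ?_)
  exact hm ▸ Finset.dvd_gcd fun j _ ↦ MvPolynomial.dvd_of_pow_eq_C_mul_prod_X_pow hc hr j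

theorem prod_X_pow_sub_C_mul_rootOfUnity {R : Type*} [CommRing R] [IsDomain R] {ℓ : ℕ} (hℓ : 0 < ℓ)
    {ζ : R} (hζ : IsPrimitiveRoot ζ ℓ) (a : R) (n : ℕ) :
    ∏ i ∈ Finset.range ℓ, (X ^ n - C (ζ ^ i * a)) = X ^ (n * ℓ) - C (a ^ ℓ) := by
  simpa [map_prod, pow_mul] using
    (congrArg (aeval (X ^ n : R[X])) (X_pow_sub_C_eq_prod hζ hℓ rfl)).symm

theorem eq_of_associated_X_pow_sub_C {R : Type*} [CommRing R] {n : ℕ} (hn : n ≠ 0) {a b : R}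
    (h : Associated (X ^ n - C a) (X ^ n - C b)) : a = b :=
  C_injective (sub_right_injective (eq_of_monic_of_associated
    (monic_X_pow_sub_C a hn) (monic_X_pow_sub_C b hn) h))

theorem squarefree_prod_of_pairwise_not_associated {α ι : Type*} [CommMonoidWithZero α]
    [IsCancelMulZero α] [DecompositionMonoid α] [Fintype ι] {f : ι → α}
    (hf : ∀ i, Irreducible (f i))
    (hpair : Pairwise fun i j ↦ ¬ Associated (f i) (f j)) :
    Squarefree (∏ i, f i) :=
  Finset.squarefree_prod_of_pairwise_isCoprime
    (fun i _ j _ hij ↦ (hf i).isRelPrime_iff_not_dvd.mpr fun h ↦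
      hpair hij ((hf i).associated_of_dvd (hf j) h))
    fun i _ ↦ (hf i).squarefree

/-- Let `m_0, …, m_k` and `e` be positive integers with `m j ∣ e` for
every `j` and let `ℓ = gcd(m_0, …, m_k)`.  Then `t^e − x_0^{m_0} ⋯ x_k^{m_k}` factors in
`ℂ[x_0, …, x_k, t]` as a product of exactly `ℓ` irreducible factors, pairwise
non-associated; in particular the polynomial is squarefree. -/
theorem stmt_3 (k e : ℕ) (he : 0 < e) (m : Fin (k + 1) → ℕ)
    (hm : ∀ j, 0 < m j) (hme : ∀ j, m j ∣ e) :
    (∃ f : Fin (Finset.univ.gcd m) → (MvPolynomial (Fin (k + 1)) ℂ)[X],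
        (∀ i, Irreducible (f i)) ∧
        (Pairwise fun i j => ¬ Associated (f i) (f j)) ∧
        ∏ i, f i =
          (X : (MvPolynomial (Fin (k + 1)) ℂ)[X]) ^ e - C (∏ j, MvPolynomial.X j ^ m j)) ∧
    Squarefree
      ((X : (MvPolynomial (Fin (k + 1)) ℂ)[X]) ^ e - C (∏ j, MvPolynomial.X j ^ m j)) := by
  set ℓ := Finset.univ.gcd m
  have hℓm (j) : ℓ ∣ m j := Finset.gcd_dvd (Finset.mem_univ j)
  have hℓ : 0 < ℓ := Nat.pos_of_dvd_of_pos (hℓm 0) (hm 0)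
  have hℓe : ℓ ∣ e := (hℓm 0).trans (hme 0)
  have he' : e / ℓ ≠ 0 := (Nat.div_pos (Nat.le_of_dvd he hℓe) hℓ).ne'
  obtain ⟨ζ, hζ⟩ : ∃ ζ : ℂ, IsPrimitiveRoot ζ ℓ := ⟨_, Complex.isPrimitiveRoot_exp ℓ hℓ.ne'⟩
  let N : MvPolynomial (Fin (k + 1)) ℂ := ∏ j, MvPolynomial.X j ^ (m j / ℓ)
  let f (i : Fin ℓ) : (MvPolynomial (Fin (k + 1)) ℂ)[X] :=
    X ^ (e / ℓ) - C (MvPolynomial.C (ζ ^ (i : ℕ)) * N)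
  have hirr (i : Fin ℓ) : Irreducible (f i) :=
    X_pow_sub_C_mul_prod_X_pow_irreducible Complex.I Complex.I_sq he'
      (Finset.gcd_div_eq_one (Finset.mem_univ 0) (hm 0).ne') (pow_ne_zero _ (hζ.ne_zero hℓ.ne'))
  have hpair : Pairwise fun i j ↦ ¬ Associated (f i) (f j) := fun i j hij h ↦ by
    have hN : N ≠ 0 :=
      Finset.prod_ne_zero_iff.mpr fun j _ ↦ pow_ne_zero _ (MvPolynomial.X_ne_zero j)
    exact hij (Fin.ext (hζ.pow_inj i.isLt j.isLt (MvPolynomial.C_injective _ _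
      (mul_right_cancel₀ hN (eq_of_associated_X_pow_sub_C he' h)))))
  have hprod : ∏ i, f i = X ^ e - C (∏ j, MvPolynomial.X j ^ m j) := by
    simp only [f, map_pow]
    rw [Fin.prod_univ_eq_prod_range (fun i ↦ X ^ (e / ℓ) - C (MvPolynomial.C ζ ^ i * N)),
      prod_X_pow_sub_C_mul_rootOfUnity hℓ (hζ.map_of_injective (MvPolynomial.C_injective _ _)),
      Nat.div_mul_cancel hℓe, ← Finset.prod_pow]
    simp only [← pow_mul, Nat.div_mul_cancel (hℓm _)]
  exact ⟨⟨f, hirr, hpair, hprod⟩, hprod ▸ squarefree_prod_of_pairwise_not_associated hirr hpair⟩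
end
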